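/- arXiv:2210.02984 — 3 statements merged into one kernel-verified Lean document; each statement's English description precedes it below -/
import Mathlib

section
/- Let M' be a positive integer, let v = (v_x, v_y) ∈ ℝ², and let H : ℤ × ℤ → ℂ be finitely supported. Define ψ : ℝ × ℝ × ℝ → ℂ by ψ(t, x, y) = Σ_{(n,m)} H(n,m) · e^{−2πi t (v_x n + v_y m)} · e^{2πi ((x + t v_x)·Alias_{M'}(n) + (y + t v_y)·Alias_{M'}(m))} (translate the band-limited image by t·v, alias each frequency pair (n,m) to (Alias_{M'}(n), Alias_{M'}(m)), and translate the result back by −t·v). Assume: (i) for every (n,m) in the support of H, Alias_{M'}(n) = n or Alias_{M'}(m) = m; and (ii) for every (n', m') ∈ ℤ², there is at most one (n,m) in the support of H with (Alias_{M'}(n), Alias_{M'}(m)) = (n', m') and (n,m) ≠ (n', m'). Then for every (k, l) the partial derivative ∂ψ/∂t(0, k/M', l/M') exists, and (1/M'²) · Σ_{k=0}^{M'−1} Σ_{l=0}^{M'−1} |∂ψ/∂t(0, k/M', l/M')|² = (2π)² · Σ_{(n,m)} |H(n,m)|² · ( v_x² (Alias_{M'}(n) − n)² + v_y² (Alias_{M'}(m)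 − m)² ). -/
/-!
Write `(a_p, b_p)` for the aliased frequency of `p = (n, m)`. At `t = 0` the derivative
`∂ψ/∂t(0, x, y)` is the trigonometric polynomial `∑_p c_p e^{2πi (x a_p + y b_p)}` with
`c_p = 2πi H(p) (v_x (a_p − n) + v_y (b_p − m))`. Aliased frequencies lie in `[−M'/2, M'/2)`,
so they are congruent mod `M'` only when equal, and orthogonality of the characters on the
`M' × M'` grid turns the mean of `|∂ψ/∂t|²` into `∑ c_p c̄_q` over pairs with the same aliased
frequency. By (ii), a pair `p ≠ q` with the same aliased frequency contains a frequency fixed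
by aliasing, whose coefficient vanishes; by (i), `|c_p|²` has no cross term `v_x v_y`.
-/

open Complex Real

/-- The aliasing map: `aliasMap fs n` is the representative of `n` modulo `fs`
lying in `[-fs/2, fs/2)`. -/
def aliasMap (fs : ℕ) (n : ℤ) : ℤ :=
  if 2 * (n % (fs : ℤ)) < (fs : ℤ) then n % (fs : ℤ) else n % (fs : ℤ) - (fs : ℤ)

/-- `psi2 M' vx vy H t x y`: translate the band-limited image with Fourier coefficients
`H` by `t·(vx, vy)`, alias each frequency pair `(n, m)` to
`(aliasMap M' n, aliasMap M' m)`, and translate the result back by `−t·(vx, vy)`. -/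
noncomputable def psi2 (M' : ℕ) (vx vy : ℝ) (H : ℤ × ℤ →₀ ℂ) (t x y : ℝ) : ℂ :=
  ∑ p ∈ H.support,
    H p * Complex.exp (-(2 * (π : ℂ) * I * (t : ℂ) *
        ((vx : ℂ) * (p.1 : ℂ) + (vy : ℂ) * (p.2 : ℂ)))) *
      Complex.exp (2 * (π : ℂ) * I *
        (((x : ℂ) + (t : ℂ) * (vx : ℂ)) * (aliasMap M' p.1 : ℂ) +
          ((y : ℂ) + (t : ℂ) * (vy : ℂ)) * (aliasMap M' p.2 : ℂ)))

open Finset ComplexConjugate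

lemma aliasMap_bounds {fs : ℕ} (hfs : 0 < fs) (n : ℤ) :
    -(fs : ℤ) ≤ 2 * aliasMap fs n ∧ 2 * aliasMap fs n < fs := by
  have h0 := Int.emod_nonneg n (by omega : (fs : ℤ) ≠ 0)
  have h1 := Int.emod_lt_of_pos n (by omega : (0 : ℤ) < fs)
  unfold aliasMap
  split <;> omega

lemma aliasMap_eq_of_dvd_sub {fs : ℕ} (hfs : 0 < fs) {m n : ℤ}
    (h : (fs : ℤ) ∣ aliasMap fs m - aliasMap fs n) : aliasMap fs m = aliasMap fs n := by
  have hm := aliasMap_bounds hfs m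
  have hn := aliasMap_bounds hfs n
  have := Int.eq_zero_of_abs_lt_dvd h (by rw [abs_lt]; omega)
  omega

lemma geom_sum_eq_ite_of_pow_eq_one {K : Type*} [Field K] [DecidableEq K] {ω : K} {N : ℕ}
    (hω : ω ^ N = 1) :
    ∑ k ∈ range N, ω ^ k = if ω = 1 then (N : K) else 0 := by
  split_ifs with h
  · simp [h]
  · rw [geom_sum_eq h, hω, sub_self, zero_div]

lemma sum_range_exp_two_pi_I_mul {N : ℕ} (hN : 0 < N) (s : ℤ) :
    ∑ k ∈ range N, cexp (2 * π * I * ((((k : ℝ) / N : ℝ) : ℂ) * s)) =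
      if (N : ℤ) ∣ s then (N : ℂ) else 0 := by
  have hζ := Complex.isPrimitiveRoot_exp N hN.ne'
  have hpow : ∀ k : ℕ, cexp (2 * π * I * ((((k : ℝ) / N : ℝ) : ℂ) * s)) =
      (cexp (2 * π * I / N) ^ s) ^ k := by
    intro k
    rw [← Complex.exp_int_mul, ← Complex.exp_nat_mul]
    push_cast
    ring_nf
  have hroot : (cexp (2 * π * I / N) ^ s) ^ N = 1 := by
    rw [← zpow_natCast, ← zpow_mul, mul_comm s, zpow_mul, zpow_natCast, hζ.pow_eq_one, one_zpow]
  simp only [hpow, geom_sum_eq_ite_of_pow_eq_one hroot, hζ.zpow_eq_one_iff_dvd]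

lemma sum_grid_exp_two_pi_I_mul {N : ℕ} (hN : 0 < N) (s t : ℤ) :
    ∑ k ∈ range N, ∑ l ∈ range N,
        cexp (2 * π * I * ((((k : ℝ) / N : ℝ) : ℂ) * s + (((l : ℝ) / N : ℝ) : ℂ) * t)) =
      if (N : ℤ) ∣ s ∧ (N : ℤ) ∣ t then (N : ℂ) ^ 2 else 0 := by
  simp only [mul_add, Complex.exp_add, ← mul_sum, ← sum_mul, sum_range_exp_two_pi_I_mul hN]
  split_ifs <;> simp_all [sq]

lemma sq_norm_sum_mul_exp {ι : Type*} (s : Finset ι) (d : ι → ℂ) (a b : ι → ℤ) (x y : ℝ) :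
    (‖∑ p ∈ s, d p * cexp (2 * π * I * ((x : ℂ) * a p + (y : ℂ) * b p))‖ : ℂ) ^ 2 =
      ∑ p ∈ s, ∑ q ∈ s, d p * conj (d q) *
        cexp (2 * π * I * ((x : ℂ) * (a p - a q : ℤ) + (y : ℂ) * (b p - b q : ℤ))) := by
  rw [← Complex.mul_conj', map_sum, sum_mul_sum]
  refine sum_congr rfl fun p _ => sum_congr rfl fun q _ => ?_
  rw [map_mul, ← Complex.exp_conj, mul_mul_mul_comm, ← Complex.exp_add]
  simp only [map_mul, map_add, map_ofNat, Complex.conj_ofReal, Complex.conj_I, map_intCast]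
  push_cast
  congr 2
  ring

theorem sum_grid_sq_norm_sum_mul_exp {ι : Type*} (s : Finset ι) {N : ℕ} (hN : 0 < N)
    (d : ι → ℂ) (a b : ι → ℤ)
    (hd : ∀ p ∈ s, ∀ q ∈ s, p ≠ q → (N : ℤ) ∣ a p - a q → (N : ℤ) ∣ b p - b q →
      d p * conj (d q) = 0) :
    ∑ k ∈ range N, ∑ l ∈ range N,
        ‖∑ p ∈ s, d p * cexp (2 * π * I *
          ((((k : ℝ) / N : ℝ) : ℂ) * a p + (((l : ℝ) / N : ℝ) : ℂ) * b p))‖ ^ 2 =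
      (N : ℝ) ^ 2 * ∑ p ∈ s, ‖d p‖ ^ 2 := by
  apply Complex.ofReal_injective
  simp only [Complex.ofReal_sum, Complex.ofReal_mul, Complex.ofReal_pow,
    Complex.ofReal_natCast, sq_norm_sum_mul_exp]
  rw [← sum_product' (range N) (range N), sum_comm]
  simp only [sum_comm (s := range N ×ˢ range N)]
  simp only [sum_product, ← mul_sum, sum_grid_exp_two_pi_I_mul hN]
  rw [mul_sum]
  refine sum_congr rfl fun p hp => ?_
  rw [sum_eq_single_of_mem p hp]
  · simp [Complex.mul_conj', mul_comm]
  · intro q hq hqp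
    split_ifs with h
    · rw [hd p hp q hq (Ne.symm hqp) h.1 h.2, zero_mul]
    · rw [mul_zero]

noncomputable def aliasDerivCoeff (M' : ℕ) (vx vy : ℝ) (H : ℤ × ℤ →₀ ℂ) (p : ℤ × ℤ) : ℂ :=
  H p * (2 * π * I * (vx * (aliasMap M' p.1 - p.1 : ℤ) + vy * (aliasMap M' p.2 - p.2 : ℤ)))

lemma psi2_eq_sum_mul_exp (M' : ℕ) (vx vy : ℝ) (H : ℤ × ℤ →₀ ℂ) (t x y : ℝ) :
    psi2 M' vx vy H t x y = ∑ p ∈ H.support,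
      H p * cexp (2 * π * I * ((x : ℂ) * aliasMap M' p.1 + (y : ℂ) * aliasMap M' p.2)) *
        cexp (t * (2 * π * I *
          (vx * (aliasMap M' p.1 - p.1 : ℤ) + vy * (aliasMap M' p.2 - p.2 : ℤ)))) := by
  refine sum_congr rfl fun p _ => ?_
  simp only [mul_assoc, ← Complex.exp_add]
  push_cast
  congr 2
  ring

lemma hasDerivAt_psi2 (M' : ℕ) (vx vy : ℝ) (H : ℤ × ℤ →₀ ℂ) (x y : ℝ) :
    HasDerivAt (fun t => psi2 M' vx vy H t x y)
      (∑ p ∈ H.support, aliasDerivCoeff M' vx vy H p *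
        cexp (2 * π * I * ((x : ℂ) * aliasMap M' p.1 + (y : ℂ) * aliasMap M' p.2))) 0 := by
  rw [funext fun t => psi2_eq_sum_mul_exp M' vx vy H t x y]
  refine HasDerivAt.fun_sum fun p _ => ?_
  set w : ℂ := 2 * π * I * (vx * (aliasMap M' p.1 - p.1 : ℤ) + vy * (aliasMap M' p.2 - p.2 : ℤ))
  have hexp : HasDerivAt (fun t : ℝ => cexp (t * w)) w 0 := by
    simpa using ((hasDerivAt_id (0 : ℝ)).ofReal_comp.mul_const w).cexp
  refine (hexp.const_mul _).congr_deriv ?_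
  rw [aliasDerivCoeff]
  ring

lemma aliasDerivCoeff_eq_zero {M' : ℕ} {vx vy : ℝ} {H : ℤ × ℤ →₀ ℂ} {p : ℤ × ℤ}
    (hp : (aliasMap M' p.1, aliasMap M' p.2) = p) : aliasDerivCoeff M' vx vy H p = 0 := by
  obtain ⟨n, m⟩ := p
  simp only [Prod.mk.injEq] at hp
  simp [aliasDerivCoeff, hp.1, hp.2]

lemma aliasDerivCoeff_mul_conj_eq_zero {M' : ℕ} {vx vy : ℝ} {H : ℤ × ℤ →₀ ℂ}
    (hfib : ∀ q : ℤ × ℤ, ∀ p₁ ∈ H.support, ∀ p₂ ∈ H.support,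
      (aliasMap M' p₁.1, aliasMap M' p₁.2) = q → p₁ ≠ q →
      (aliasMap M' p₂.1, aliasMap M' p₂.2) = q → p₂ ≠ q → p₁ = p₂)
    {p q : ℤ × ℤ} (hp : p ∈ H.support) (hq : q ∈ H.support) (hpq : p ≠ q)
    (h₁ : aliasMap M' p.1 = aliasMap M' q.1) (h₂ : aliasMap M' p.2 = aliasMap M' q.2) :
    aliasDerivCoeff M' vx vy H p * conj (aliasDerivCoeff M' vx vy H q) = 0 := by
  have hqp : (aliasMap M' q.1, aliasMap M' q.2) = (aliasMap M' p.1, aliasMap M' p.2) := by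
    rw [h₁, h₂]
  by_cases hpfix : (aliasMap M' p.1, aliasMap M' p.2) = p
  · rw [aliasDerivCoeff_eq_zero hpfix, zero_mul]
  by_cases hqfix : (aliasMap M' q.1, aliasMap M' q.2) = q
  · rw [aliasDerivCoeff_eq_zero hqfix, map_zero, mul_zero]
  exact absurd (hfib _ p hp q hq rfl (Ne.symm hpfix) hqp fun h => hqfix (hqp.trans h.symm)) hpq

lemma sq_norm_aliasDerivCoeff {M' : ℕ} {vx vy : ℝ} {H : ℤ × ℤ →₀ ℂ} {p : ℤ × ℤ}
    (hp : aliasMap M' p.1 = p.1 ∨ aliasMap M' p.2 = p.2) :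
    ‖aliasDerivCoeff M' vx vy H p‖ ^ 2 = (2 * π) ^ 2 * (‖H p‖ ^ 2 *
      (vx ^ 2 * ((aliasMap M' p.1 - p.1 : ℤ) : ℝ) ^ 2 +
        vy ^ 2 * ((aliasMap M' p.2 - p.2 : ℤ) : ℝ) ^ 2)) := by
  have hreal : 2 * π * I * (vx * (aliasMap M' p.1 - p.1 : ℤ) + vy * (aliasMap M' p.2 - p.2 : ℤ))
      = ((2 * π * (vx * (aliasMap M' p.1 - p.1 : ℤ) + vy * (aliasMap M' p.2 - p.2 : ℤ)) : ℝ) : ℂ)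
        * I := by
    push_cast; ring
  rw [aliasDerivCoeff, hreal, norm_mul, norm_mul, Complex.norm_I, mul_one, Complex.norm_real,
    Real.norm_eq_abs, mul_pow, sq_abs]
  rcases hp with h | h <;> rw [h, sub_self] <;> push_cast <;> ring

/-- Translation equivariance error of aliasing (2d): if (i) every frequency pair in the
support of `H` has at least one unaliased component, and (ii) each output frequency
pair has at most one input pair other than itself aliasing onto it, then the mean over
the `M' × M'` sampling grid of the squared modulus of `∂ψ/∂t(0,·,·)` equals
`(2π)² ∑ₙₘ |H(n,m)|² (vx² (aliasMap M' n − n)² + vy² (aliasMap M' m − m)²)`. -/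
theorem aliasing_translation_equivariance_error_2d
    (M' : ℕ) (hM : 0 < M') (vx vy : ℝ) (H : ℤ × ℤ →₀ ℂ)
    (hdiag : ∀ p ∈ H.support, aliasMap M' p.1 = p.1 ∨ aliasMap M' p.2 = p.2)
    (hfib : ∀ q : ℤ × ℤ, ∀ p₁ ∈ H.support, ∀ p₂ ∈ H.support,
      (aliasMap M' p₁.1, aliasMap M' p₁.2) = q → p₁ ≠ q →
      (aliasMap M' p₂.1, aliasMap M' p₂.2) = q → p₂ ≠ q → p₁ = p₂) :
    (∀ k l : ℕ,
      DifferentiableAt ℝ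
        (fun t => psi2 M' vx vy H t ((k : ℝ) / (M' : ℝ)) ((l : ℝ) / (M' : ℝ))) 0) ∧
    (1 / (M' : ℝ) ^ 2) * ∑ k ∈ Finset.range M', ∑ l ∈ Finset.range M',
        ‖deriv
          (fun t => psi2 M' vx vy H t ((k : ℝ) / (M' : ℝ)) ((l : ℝ) / (M' : ℝ))) 0‖ ^ 2 =
      (2 * π) ^ 2 * ∑ p ∈ H.support, ‖H p‖ ^ 2 *
        (vx ^ 2 * ((aliasMap M' p.1 - p.1 : ℤ) : ℝ) ^ 2 +
          vy ^ 2 * ((aliasMap M' p.2 - p.2 : ℤ) : ℝ) ^ 2) := by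
  have hderiv (k l : ℕ) := hasDerivAt_psi2 M' vx vy H ((k : ℝ) / M') ((l : ℝ) / M')
  refine ⟨fun k l => (hderiv k l).differentiableAt, ?_⟩
  simp only [fun k l => (hderiv k l).deriv]
  rw [sum_grid_sq_norm_sum_mul_exp _ hM _ _ _ fun p hp q hq hpq h₁ h₂ =>
    aliasDerivCoeff_mul_conj_eq_zero hfib hp hq hpq (aliasMap_eq_of_dvd_sub hM h₁)
      (aliasMap_eq_of_dvd_sub hM h₂)]
  rw [← mul_assoc, one_div, inv_mul_cancel₀ (by positivity), one_mul, mul_sum]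
  exact sum_congr rfl fun p hp => sq_norm_aliasDerivCoeff (hdiag p hp)
end

section
/- Let V₁, V₂, V₃ be real normed vector spaces. Let A : ℝ → (V₁ →L[ℝ] V₁), B, B̄ : ℝ → (V₂ →L[ℝ] V₂), and C̄ : ℝ → (V₃ →L[ℝ] V₃) be curves of continuous linear maps, each differentiable at 0, with A(0), B(0), B̄(0), C̄(0) all equal to the identity, and with B(t) ∘ B̄(t) = id for all t in a neighborhood of 0. Let x ∈ V₁, let h : V₁ → V₂ be differentiable at x, and let f : V₂ → V₃ be differentiable at h(x). Define the Lie derivatives (L h)(x) := d/dt|_{t=0} [ B̄(t) ( h (A(t) x) ) ], (L f)(y) := d/dt|_{t=0} [ C̄(t) ( f (B(t) y) ) ], and (L (f ∘ h))(x) := d/dt|_{t=0} [ C̄(t) ( f ( h (A(t) x) ) ) ]. Then all three derivatives exist and (L (f ∘ h))(x) = (L f)(h(x)) + (Df)|_{h(x)} ( (L h)(x) ), where (Df)|_{h(x)} is the Fréchet derivative of f at h(x). -/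
/-!
Near `0` the identity `B t ∘ B̄ t = id` lets one insert `B t ∘ B̄ t` between `f` and `h`, so the
composite curve equals `C̄ t (f (B t (g t)))`, where `g t = B̄ t (h (A t x))` is the curve defining
`(L h)(x)`. At `t = 0` every curve of maps is the identity, so the product and chain rules give
the derivative `C̄'(0) (f (h x)) + Df (B'(0) (h x)) + Df (g'(0))`, and the first two terms are
`(L f)(h x)`.
-/

theorem HasDerivAt.clm_apply_comp_of_eq_id {𝕜 V W : Type*} [NontriviallyNormedField 𝕜]
    [NormedAddCommGroup V] [NormedSpace 𝕜 V] [NormedAddCommGroup W] [NormedSpace 𝕜 W]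
    {C : 𝕜 → W →L[𝕜] W} {C' : W →L[𝕜] W} {f : V → W} {f' : V →L[𝕜] W} {u : 𝕜 → V} {u' y : V}
    {t₀ : 𝕜} (hC : HasDerivAt C C' t₀) (hC₀ : C t₀ = ContinuousLinearMap.id 𝕜 W) (hf : HasFDerivAt f f' y)
    (hu : HasDerivAt u u' t₀) (hy : y = u t₀) :
    HasDerivAt (fun t => C t (f (u t))) (C' (f y) + f' u') t₀ := by
  have hfu : HasDerivAt (fun t => f (u t)) (f' u') t₀ := hf.comp_hasDerivAt_of_eq t₀ hu hy
  simpa [hC₀, hy] using hC.clm_apply hfu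

/-- Chain rule for the Lie derivative: for curves of continuous linear maps acting on
input and output spaces (equal to the identity at `t = 0`, with `B̄` inverse to `B`
near `0`), the Lie derivative of a composition `f ∘ h` at `x` equals the Lie derivative
of `f` at `h x` plus the Fréchet derivative of `f` at `h x` applied to the Lie
derivative of `h` at `x`. -/
theorem lie_derivative_chain_rule
    {V₁ V₂ V₃ : Type*} [NormedAddCommGroup V₁] [NormedSpace ℝ V₁]
    [NormedAddCommGroup V₂] [NormedSpace ℝ V₂]
    [NormedAddCommGroup V₃] [NormedSpace ℝ V₃]
    (A : ℝ → V₁ →L[ℝ] V₁) (B Bbar : ℝ → V₂ →L[ℝ] V₂) (Cbar : ℝ → V₃ →L[ℝ] V₃)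
    (hA : DifferentiableAt ℝ A 0) (hB : DifferentiableAt ℝ B 0)
    (hBbar : DifferentiableAt ℝ Bbar 0) (hCbar : DifferentiableAt ℝ Cbar 0)
    (hA0 : A 0 = ContinuousLinearMap.id ℝ V₁)
    (hB0 : B 0 = ContinuousLinearMap.id ℝ V₂)
    (hBbar0 : Bbar 0 = ContinuousLinearMap.id ℝ V₂)
    (hCbar0 : Cbar 0 = ContinuousLinearMap.id ℝ V₃)
    (hinv : ∀ᶠ t in nhds (0 : ℝ), (B t).comp (Bbar t) = ContinuousLinearMap.id ℝ V₂)
    (x : V₁) (h : V₁ → V₂) (f : V₂ → V₃)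
    (hh : DifferentiableAt ℝ h x) (hf : DifferentiableAt ℝ f (h x)) :
    DifferentiableAt ℝ (fun t => Bbar t (h (A t x))) 0 ∧
    DifferentiableAt ℝ (fun t => Cbar t (f (B t (h x)))) 0 ∧
    DifferentiableAt ℝ (fun t => Cbar t (f (h (A t x)))) 0 ∧
    deriv (fun t => Cbar t (f (h (A t x)))) 0 =
      deriv (fun t => Cbar t (f (B t (h x)))) 0 +
        fderiv ℝ f (h x) (deriv (fun t => Bbar t (h (A t x))) 0) := by
  set g : ℝ → V₂ := fun t => Bbar t (h (A t x))
  have hAx : HasDerivAt (fun t => A t x) (deriv A 0 x) 0 := by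
    simpa [hA0] using hA.hasDerivAt.clm_apply (hasDerivAt_const 0 x)
  have hg : HasDerivAt g (deriv Bbar 0 (h x) + fderiv ℝ h x (deriv A 0 x)) 0 :=
    hBbar.hasDerivAt.clm_apply_comp_of_eq_id hBbar0 hh.hasFDerivAt hAx (by simp [hA0])
  have hLf : HasDerivAt (fun t => Cbar t (f (B t (h x))))
      (deriv Cbar 0 (f (h x)) + fderiv ℝ f (h x) (deriv B 0 (h x))) 0 :=
    hCbar.hasDerivAt.clm_apply_comp_of_eq_id hCbar0 hf.hasFDerivAt
      (by simpa [hB0] using hB.hasDerivAt.clm_apply (hasDerivAt_const 0 (h x))) (by simp [hB0])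
  have hBg : HasDerivAt (fun t => B t (g t)) (deriv B 0 (h x) + deriv g 0) 0 :=
    hB.hasDerivAt.clm_apply_comp_of_eq_id (f := fun v => v) hB0 (hasFDerivAt_id _)
      hg.differentiableAt.hasDerivAt (by simp [g, hA0, hBbar0])
  have hLfh : HasDerivAt (fun t => Cbar t (f (B t (g t))))
      (deriv Cbar 0 (f (h x)) + fderiv ℝ f (h x) (deriv B 0 (h x) + deriv g 0)) 0 :=
    hCbar.hasDerivAt.clm_apply_comp_of_eq_id hCbar0 hf.hasFDerivAt hBg
      (by simp [g, hA0, hB0, hBbar0])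
  have hinsert : (fun t => Cbar t (f (h (A t x)))) =ᶠ[nhds 0]
      fun t => Cbar t (f (B t (g t))) := by
    filter_upwards [hinv] with t ht
    rw [show B t (g t) = h (A t x) from DFunLike.congr_fun ht _]
  have hLfh' := hLfh.congr_of_eventuallyEq hinsert
  refine ⟨hg.differentiableAt, hLf.differentiableAt, hLfh'.differentiableAt, ?_⟩
  rw [hLfh'.deriv, hLf.deriv, map_add, add_assoc]
end

section
/- Let N ≥ 1, let V₀, V₁, …, V_N be real normed vector spaces, and for each i = 1,…,N let fᵢ : V_{i−1} → Vᵢ. For each i = 0,…,N let ρᵢ, ρ̄ᵢ : ℝ → (Vᵢ →L[ℝ] Vᵢ) be curves of continuous linear maps, each differentiable at 0, with ρᵢ(0) = ρ̄ᵢ(0) = id and ρᵢ(t) ∘ ρ̄ᵢ(t) = id for all t in a neighborhood of 0. Fix x ∈ V₀ and set z₀ = x and zᵢ = fᵢ(z_{i−1}) for i = 1,…,N. Assume each fᵢ is differentiable at z_{i−1}. Define (L fᵢ)(y) := d/dt|_{t=0} [ ρ̄ᵢ(t) ( fᵢ (ρ_{i−1}(t) y) ) ] and L(f_N ∘ ⋯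 ∘ f₁)(x) := d/dt|_{t=0} [ ρ̄_N(t) ( (f_N ∘ ⋯ ∘ f₁)(ρ₀(t) x) ) ]. Then all these derivatives exist and L(f_N ∘ ⋯ ∘ f₁)(x) = Σ_{i=1}^{N} D(f_N ∘ ⋯ ∘ f_{i+1})|_{zᵢ} ( (L fᵢ)(z_{i−1}) ), where D(f_N ∘ ⋯ ∘ f_{i+1})|_{zᵢ} denotes the Fréchet derivative of the composition of the layers after layer i, evaluated at zᵢ (interpreted as the identity map when i = N). -/
/-!
Differentiating `ρ t ∘ ρbar t = id` at `0` gives `ρbar' 0 = -A` with `A = ρ' 0`, so the Lie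
derivative of any map `g` at `y` is `Dg(y)(A y) - A (g y)`. For the `i`-th layer, pushed forward
by `DF_{i+1}(z_{i+1})`, the chain rule `DF_i(z_i) = DF_{i+1}(z_{i+1}) ∘ Df_i(z_i)` turns this into
`g i - g (i + 1)` with `g i = DF_i(z_i)(A_i z_i)`. The sum telescopes to `g 0 - g N`, which is the
Lie derivative of the whole network `F 0`, since `F N = id`.
-/

open Filter Topology

section Conjugation

variable {𝕜 : Type*} [NontriviallyNormedField 𝕜]
  {E : Type*} [NormedAddCommGroup E] [NormedSpace 𝕜 E]
  {F : Type*} [NormedAddCommGroup F] [NormedSpace 𝕜 F]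

theorem HasDerivAt.neg_of_comp_eventually_eq_id {ρ ρbar : 𝕜 → E →L[𝕜] E} {A : E →L[𝕜] E}
    {a : 𝕜} (hρ : HasDerivAt ρ A a) (hρbar : DifferentiableAt 𝕜 ρbar a)
    (hρa : ρ a = ContinuousLinearMap.id 𝕜 E) (hρbara : ρbar a = ContinuousLinearMap.id 𝕜 E)
    (hinv : ∀ᶠ t in 𝓝 a, (ρ t).comp (ρbar t) = ContinuousLinearMap.id 𝕜 E) :
    HasDerivAt ρbar (-A) a := by
  have hprod := hρ.clm_comp hρbar.hasDerivAt
  rw [hρa, hρbara, ContinuousLinearMap.comp_id, ContinuousLinearMap.id_comp] at hprod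
  have hconst : HasDerivAt (fun t => (ρ t).comp (ρbar t)) 0 a :=
    (hasDerivAt_const a _).congr_of_eventuallyEq hinv
  have hsum : A + _root_.deriv ρbar a = 0 := hprod.unique hconst
  rw [← eq_neg_of_add_eq_zero_right hsum]
  exact hρbar.hasDerivAt

theorem HasFDerivAt.hasDerivAt_conj {ρ : 𝕜 → E →L[𝕜] E} {σ : 𝕜 → F →L[𝕜] F}
    {A : E →L[𝕜] E} {B : F →L[𝕜] F} {a : 𝕜} {f : E → F} {f' : E →L[𝕜] F} {y : E}
    (hf : HasFDerivAt f f' y) (hρ : HasDerivAt ρ A a) (hσ : HasDerivAt σ B a)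
    (hρa : ρ a = ContinuousLinearMap.id 𝕜 E) (hσa : σ a = ContinuousLinearMap.id 𝕜 F) :
    HasDerivAt (fun t => σ t (f (ρ t y))) (f' (A y) + B (f y)) a := by
  have hρy : HasDerivAt (fun t => ρ t y) (A y) a := by
    simpa using hρ.clm_apply (hasDerivAt_const a y)
  have hfρ : HasDerivAt (fun t => f (ρ t y)) (f' (A y)) a := by
    refine HasFDerivAt.comp_hasDerivAt a ?_ hρy
    simpa [hρa] using hf
  simpa [hρa, hσa, add_comm] using hσ.clm_apply hfρ

end Conjugation

section Layers

variable {V : ℕ → Type*} {N : ℕ} {f : ∀ i, V i → V (i + 1)} {z : ∀ i, V i}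
  {F : ∀ i, V i → V N}

theorem tail_apply_eq (hz : ∀ i, z (i + 1) = f i (z i)) (hFN : F N = id)
    (hF : ∀ i < N, F i = F (i + 1) ∘ f i) {i : ℕ} (hi : i ≤ N) : F i (z i) = z N := by
  induction hi using Nat.decreasingInduction with
  | self => rw [hFN, id]
  | of_succ k hk ih => rw [hF k hk, Function.comp_apply, ← hz, ih]

variable {𝕜 : Type*} [NontriviallyNormedField 𝕜]
  [∀ i, NormedAddCommGroup (V i)] [∀ i, NormedSpace 𝕜 (V i)]

theorem differentiableAt_tail (hz : ∀ i, z (i + 1) = f i (z i))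
    (hf : ∀ i, DifferentiableAt 𝕜 (f i) (z i)) (hFN : F N = id)
    (hF : ∀ i < N, F i = F (i + 1) ∘ f i) {i : ℕ} (hi : i ≤ N) :
    DifferentiableAt 𝕜 (F i) (z i) := by
  induction hi using Nat.decreasingInduction with
  | self => rw [hFN]; exact differentiableAt_id
  | of_succ k hk ih =>
    rw [hF k hk]
    exact (hz k ▸ ih).comp (z k) (hf k)

theorem fderiv_tail_eq_comp (hz : ∀ i, z (i + 1) = f i (z i))
    (hf : ∀ i, DifferentiableAt 𝕜 (f i) (z i)) (hFN : F N = id)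
    (hF : ∀ i < N, F i = F (i + 1) ∘ f i) {i : ℕ} (hi : i < N) :
    fderiv 𝕜 (F i) (z i) = (fderiv 𝕜 (F (i + 1)) (z (i + 1))).comp (fderiv 𝕜 (f i) (z i)) := by
  have hdiff : DifferentiableAt 𝕜 (F (i + 1)) (f i (z i)) :=
    hz i ▸ differentiableAt_tail hz hf hFN hF (Nat.succ_le_of_lt hi)
  rw [hF i hi, fderiv_comp (z i) hdiff (hf i), hz i]

end Layers

theorem lie_derivative_layerwise_general
    (N : ℕ) (V : ℕ → Type*) [∀ i, NormedAddCommGroup (V i)]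
    [∀ i, NormedSpace ℝ (V i)]
    (f : ∀ i, V i → V (i + 1))
    (ρ ρbar : ∀ i, ℝ → V i →L[ℝ] V i)
    (hρd : ∀ i, DifferentiableAt ℝ (ρ i) 0)
    (hρbard : ∀ i, DifferentiableAt ℝ (ρbar i) 0)
    (hρ0 : ∀ i, ρ i 0 = ContinuousLinearMap.id ℝ (V i))
    (hρbar0 : ∀ i, ρbar i 0 = ContinuousLinearMap.id ℝ (V i))
    (hinv : ∀ i, ∀ᶠ t in nhds (0 : ℝ),
      (ρ i t).comp (ρbar i t) = ContinuousLinearMap.id ℝ (V i))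
    (x : V 0) (z : ∀ i, V i) (hz0 : z 0 = x)
    (hz : ∀ i, z (i + 1) = f i (z i))
    (hf : ∀ i, DifferentiableAt ℝ (f i) (z i))
    (F : ∀ i, V i → V N)
    (hFN : F N = id)
    (hF : ∀ i < N, F i = F (i + 1) ∘ f i) :
    (∀ i < N, DifferentiableAt ℝ (fun t => ρbar (i + 1) t (f i (ρ i t (z i)))) 0) ∧
    DifferentiableAt ℝ (fun t => ρbar N t (F 0 (ρ 0 t x))) 0 ∧
    deriv (fun t => ρbar N t (F 0 (ρ 0 t x))) 0 =
      ∑ i ∈ Finset.range N,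
        fderiv ℝ (F (i + 1)) (z (i + 1))
          (deriv (fun t => ρbar (i + 1) t (f i (ρ i t (z i)))) 0) := by
  subst hz0
  set A := fun i => deriv (ρ i) 0
  have hρA (i : ℕ) : HasDerivAt (ρ i) (A i) 0 := (hρd i).hasDerivAt
  have hρbarA (i : ℕ) : HasDerivAt (ρbar i) (-A i) 0 :=
    (hρA i).neg_of_comp_eventually_eq_id (hρbard i) (hρ0 i) (hρbar0 i) (hinv i)
  have hlayer (i : ℕ) : HasDerivAt (fun t => ρbar (i + 1) t (f i (ρ i t (z i))))
      (fderiv ℝ (f i) (z i) (A i (z i)) - A (i + 1) (z (i + 1))) 0 := by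
    simpa [hz, sub_eq_add_neg] using
      (hf i).hasFDerivAt.hasDerivAt_conj (hρA i) (hρbarA (i + 1)) (hρ0 i) (hρbar0 (i + 1))
  have hnet : HasDerivAt (fun t => ρbar N t (F 0 (ρ 0 t (z 0))))
      (fderiv ℝ (F 0) (z 0) (A 0 (z 0)) - A N (z N)) 0 := by
    simpa [tail_apply_eq hz hFN hF N.zero_le, sub_eq_add_neg] using
      (differentiableAt_tail hz hf hFN hF N.zero_le).hasFDerivAt.hasDerivAt_conj
        (hρA 0) (hρbarA N) (hρ0 0) (hρbar0 N)
  set g := fun i => fderiv ℝ (F i) (z i) (A i (z i))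
  refine ⟨fun i _ => (hlayer i).differentiableAt, hnet.differentiableAt, ?_⟩
  calc deriv (fun t => ρbar N t (F 0 (ρ 0 t (z 0)))) 0 = g 0 - g N := by
        simp [hnet.deriv, g, hFN]
    _ = ∑ i ∈ Finset.range N, (g i - g (i + 1)) := (Finset.sum_range_sub' g N).symm
    _ = _ := by
      refine Finset.sum_congr rfl fun i hi => ?_
      rw [(hlayer i).deriv, map_sub]
      simp only [g, fderiv_tail_eq_comp hz hf hFN hF (Finset.mem_range.mp hi),
        ContinuousLinearMap.comp_apply]

/-- Layerwise decomposition of the Lie derivative of a composition of layers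
`f_N ∘ ⋯ ∘ f₁` (here indexed `f 0, …, f (N-1)` with `f i : V i → V (i+1)`): the Lie
derivative of the whole network equals the sum over layers of the layer's Lie
derivative propagated through the Jacobians of the subsequent layers.
`z i` is the activation after `i` layers, and `F i` is the composition of the layers
after position `i` (so `F N = id` and `F i = F (i+1) ∘ f i` for `i < N`). -/
theorem lie_derivative_layerwise
    (N : ℕ) (hN : 1 ≤ N) (V : ℕ → Type*) [∀ i, NormedAddCommGroup (V i)]
    [∀ i, NormedSpace ℝ (V i)]
    (f : ∀ i, V i → V (i + 1))
    (ρ ρbar : ∀ i, ℝ → V i →L[ℝ] V i)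
    (hρd : ∀ i, DifferentiableAt ℝ (ρ i) 0)
    (hρbard : ∀ i, DifferentiableAt ℝ (ρbar i) 0)
    (hρ0 : ∀ i, ρ i 0 = ContinuousLinearMap.id ℝ (V i))
    (hρbar0 : ∀ i, ρbar i 0 = ContinuousLinearMap.id ℝ (V i))
    (hinv : ∀ i, ∀ᶠ t in nhds (0 : ℝ),
      (ρ i t).comp (ρbar i t) = ContinuousLinearMap.id ℝ (V i))
    (x : V 0) (z : ∀ i, V i) (hz0 : z 0 = x)
    (hz : ∀ i, z (i + 1) = f i (z i))
    (hf : ∀ i, DifferentiableAt ℝ (f i) (z i))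
    (F : ∀ i, V i → V N)
    (hFN : F N = id)
    (hF : ∀ i < N, F i = F (i + 1) ∘ f i) :
    (∀ i < N, DifferentiableAt ℝ (fun t => ρbar (i + 1) t (f i (ρ i t (z i)))) 0) ∧
    DifferentiableAt ℝ (fun t => ρbar N t (F 0 (ρ 0 t x))) 0 ∧
    deriv (fun t => ρbar N t (F 0 (ρ 0 t x))) 0 =
      ∑ i ∈ Finset.range N,
        fderiv ℝ (F (i + 1)) (z (i + 1))
          (deriv (fun t => ρbar (i + 1) t (f i (ρ i t (z i)))) 0) :=
  lie_derivative_layerwise_general N V f ρ ρbar hρd hρbard hρ0 hρbar0 hinv x z hz0 hz hf F hFN hF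
end
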